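/- arXiv:2502.06718 — 2 statements merged into one kernel-verified Lean document; each statement's English description precedes it below -/
import Mathlib

section
/- The number of tuples (a,b,c,d,e) ∈ F^5 with a ≠ 0 satisfying 4ae − 4bd + 3c² = 0 equals q³·(q−1). Consequently, the number of tuples (a,b,c,d,e,f) ∈ F^6 with a ≠ 0 and f = 0 such that X(a,b,c,d,e,f) has rank 4 and X(a,b,c,d,e,f)² has rank 1 equals q³·(q−1). -/
section AuxVecLemmas

variable {α : Type*}

@[simp] lemma consv1_1 (x : α) (u : Fin 1 → α) : Matrix.vecCons x u 1 = u 0 := rfl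
@[simp] lemma consv2_1 (x : α) (u : Fin 2 → α) : Matrix.vecCons x u 1 = u 0 := rfl
@[simp] lemma consv2_2 (x : α) (u : Fin 2 → α) : Matrix.vecCons x u 2 = u 1 := rfl
@[simp] lemma consv3_1 (x : α) (u : Fin 3 → α) : Matrix.vecCons x u 1 = u 0 := rfl
@[simp] lemma consv3_2 (x : α) (u : Fin 3 → α) : Matrix.vecCons x u 2 = u 1 := rfl
@[simp] lemma consv3_3 (x : α) (u : Fin 3 → α) : Matrix.vecCons x u 3 = u 2 := rfl
@[simp] lemma consv4_1 (x : α) (u : Fin 4 → α) : Matrix.vecCons x u 1 = u 0 := rfl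
@[simp] lemma consv4_2 (x : α) (u : Fin 4 → α) : Matrix.vecCons x u 2 = u 1 := rfl
@[simp] lemma consv4_3 (x : α) (u : Fin 4 → α) : Matrix.vecCons x u 3 = u 2 := rfl
@[simp] lemma consv4_4 (x : α) (u : Fin 4 → α) : Matrix.vecCons x u 4 = u 3 := rfl
@[simp] lemma consv5_1 (x : α) (u : Fin 5 → α) : Matrix.vecCons x u 1 = u 0 := rfl
@[simp] lemma consv5_2 (x : α) (u : Fin 5 → α) : Matrix.vecCons x u 2 = u 1 := rfl
@[simp] lemma consv5_3 (x : α) (u : Fin 5 → α) : Matrix.vecCons x u 3 = u 2 := rfl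
@[simp] lemma consv5_4 (x : α) (u : Fin 5 → α) : Matrix.vecCons x u 4 = u 3 := rfl
@[simp] lemma consv5_5 (x : α) (u : Fin 5 → α) : Matrix.vecCons x u 5 = u 4 := rfl
@[simp] lemma consv6_1 (x : α) (u : Fin 6 → α) : Matrix.vecCons x u 1 = u 0 := rfl
@[simp] lemma consv6_2 (x : α) (u : Fin 6 → α) : Matrix.vecCons x u 2 = u 1 := rfl
@[simp] lemma consv6_3 (x : α) (u : Fin 6 → α) : Matrix.vecCons x u 3 = u 2 := rfl
@[simp] lemma consv6_4 (x : α) (u : Fin 6 → α) : Matrix.vecCons x u 4 = u 3 := rfl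
@[simp] lemma consv6_5 (x : α) (u : Fin 6 → α) : Matrix.vecCons x u 5 = u 4 := rfl
@[simp] lemma consv6_6 (x : α) (u : Fin 6 → α) : Matrix.vecCons x u 6 = u 5 := rfl

end AuxVecLemmas

/-- The image of the general nilpotent element
`a·e_{α₁} + b·e_{α₁+α₂} + c·e_{2α₁+α₂} + d·e_{3α₁+α₂} + e·e_{3α₁+2α₂} + f·e_{α₂}`
of the Lie algebra `g₂` over `F` in its faithful 7-dimensional representation. -/
noncomputable def g2X {F : Type*} [Field F] (a b c d e f : F) :
    Matrix (Fin 7) (Fin 7) F :=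
  !![0, a, b, 2*c, d, e, 0;
     0, 0, f, -2*b, -c, 0, e;
     0, 0, 0, 2*a, 0, -c, -d;
     0, 0, 0, 0, a, b, c;
     0, 0, 0, 0, 0, f, -b;
     0, 0, 0, 0, 0, 0, a;
     0, 0, 0, 0, 0, 0, 0]

section Ranks

variable {F : Type*} [Field F]

lemma rank_ge_of_submul {k : ℕ} (A : Matrix (Fin 7) (Fin 7) F)
    (P : Matrix (Fin k) (Fin 7) F) (Q : Matrix (Fin 7) (Fin k) F)
    (h : IsUnit (P * A * Q).det) : k ≤ A.rank := by
  have h1 : (P * A * Q).rank = k := by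
    rw [Matrix.rank_of_isUnit _ ((Matrix.isUnit_iff_isUnit_det _).mpr h), Fintype.card_fin]
  calc k = (P * A * Q).rank := h1.symm
    _ ≤ (A * Q).rank := by rw [Matrix.mul_assoc]; exact Matrix.rank_mul_le_right _ _
    _ ≤ A.rank := Matrix.rank_mul_le_left _ _

set_option maxHeartbeats 1000000 in
lemma g2X_sq (a b c d e : F) : (g2X a b c d e 0)^2 =
    !![0,0,0,0, a*c, b*c, 2*c^2 - 2*b*d + 2*a*e;
       0,0,0,0, -(2*a*b), -(2*b^2), -(b*c);
       0,0,0,0, 2*a^2, 2*a*b, a*c;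
       0,0,0,0,0,0,0;
       0,0,0,0,0,0,0;
       0,0,0,0,0,0,0;
       0,0,0,0,0,0,0] := by
  rw [pow_two]
  ext i j
  fin_cases i <;> fin_cases j <;>
    (simp [g2X, Matrix.mul_apply, Fin.sum_univ_seven, Matrix.vecHead, Matrix.vecTail]; try ring)

set_option maxHeartbeats 1000000 in
lemma rank_g2X_le {a : F} (b c d e : F) (ha : a ≠ 0) : (g2X a b c d e 0).rank ≤ 4 := by
  have hBC : g2X a b c d e 0 =
      (!![1,0,0,0;
          0,-(b/a),-(c/a),(a*e-b*d+c^2)/a^2;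
          0,1,0,0;
          0,0,1,0;
          0,0,0,-(b/a);
          0,0,0,1;
          0,0,0,0] : Matrix (Fin 7) (Fin 4) F) *
      (!![0,a,b,2*c,d,e,0;
          0,0,0,2*a,0,-c,-d;
          0,0,0,0,a,b,c;
          0,0,0,0,0,0,a] : Matrix (Fin 4) (Fin 7) F) := by
    ext i j
    fin_cases i <;> fin_cases j <;>
      (simp [g2X, Matrix.mul_apply, Fin.sum_univ_four, Matrix.vecHead, Matrix.vecTail];
       try field_simp; try ring)
  rw [hBC]
  refine (Matrix.rank_mul_le_right _ _).trans ?_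
  simpa using Matrix.rank_le_card_height
    (!![0,a,b,2*c,d,e,0;
        0,0,0,2*a,0,-c,-d;
        0,0,0,0,a,b,c;
        0,0,0,0,0,0,a] : Matrix (Fin 4) (Fin 7) F)

set_option maxHeartbeats 1000000 in
lemma rank_g2X {a : F} (b c d e : F) (h2 : (2:F) ≠ 0) (ha : a ≠ 0) :
    (g2X a b c d e 0).rank = 4 := by
  refine le_antisymm (rank_g2X_le b c d e ha) ?_
  refine rank_ge_of_submul _
    (!![1,0,0,0,0,0,0;
        0,0,1,0,0,0,0;
        0,0,0,1,0,0,0;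
        0,0,0,0,0,1,0] : Matrix (Fin 4) (Fin 7) F)
    (!![0,0,0,0;
        1,0,0,0;
        0,0,0,0;
        0,1,0,0;
        0,0,1,0;
        0,0,0,0;
        0,0,0,1] : Matrix (Fin 7) (Fin 4) F) ?_
  have hM : (!![1,0,0,0,0,0,0;
        0,0,1,0,0,0,0;
        0,0,0,1,0,0,0;
        0,0,0,0,0,1,0] : Matrix (Fin 4) (Fin 7) F) * g2X a b c d e 0 *
      (!![0,0,0,0;
        1,0,0,0;
        0,0,0,0;
        0,1,0,0;
        0,0,1,0;
        0,0,0,0;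
        0,0,0,1] : Matrix (Fin 7) (Fin 4) F) =
      !![a,2*c,d,0; 0,2*a,0,-d; 0,0,a,c; 0,0,0,a] := by
    ext i j
    fin_cases i <;> fin_cases j <;>
      (simp [g2X, Matrix.mul_apply, Fin.sum_univ_seven, Fin.sum_univ_four,
        Matrix.vecHead, Matrix.vecTail]; try ring)
  rw [hM]
  have hdet : (!![a,2*c,d,0; 0,2*a,0,-d; 0,0,a,c; 0,0,0,a] : Matrix (Fin 4) (Fin 4) F).det
      = 2*a^4 := by
    simp [Matrix.det_succ_row_zero, Fin.sum_univ_succ, Matrix.vecHead, Matrix.vecTail]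
    ring
  rw [hdet]
  exact isUnit_iff_ne_zero.mpr (mul_ne_zero h2 (pow_ne_zero 4 ha))

set_option maxHeartbeats 1000000 in
lemma rank_g2X_sq_ge_one {a : F} (b c d e : F) (h2 : (2:F) ≠ 0) (ha : a ≠ 0) :
    1 ≤ ((g2X a b c d e 0)^2).rank := by
  refine rank_ge_of_submul _
    (!![0,0,1,0,0,0,0] : Matrix (Fin 1) (Fin 7) F)
    (!![0;0;0;0;1;0;0] : Matrix (Fin 7) (Fin 1) F) ?_
  have hM : (!![0,0,1,0,0,0,0] : Matrix (Fin 1) (Fin 7) F) * (g2X a b c d e 0)^2 *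
      (!![0;0;0;0;1;0;0] : Matrix (Fin 7) (Fin 1) F) = !![2*a^2] := by
    rw [g2X_sq]
    ext i j
    fin_cases i <;> fin_cases j <;>
      (simp [Matrix.mul_apply, Fin.sum_univ_seven, Matrix.vecHead, Matrix.vecTail]; try ring)
  rw [hM, Matrix.det_fin_one]
  simp only [Matrix.cons_val_zero, Matrix.cons_val', Matrix.cons_val_fin_one, Matrix.of_apply]
  exact isUnit_iff_ne_zero.mpr (mul_ne_zero h2 (pow_ne_zero 2 ha))

set_option maxHeartbeats 1000000 in
lemma rank_g2X_sq_of_eq {a : F} (b c d e : F) (h2 : (2:F) ≠ 0) (ha : a ≠ 0)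
    (hQ : 4*a*e - 4*b*d + 3*c^2 = 0) : ((g2X a b c d e 0)^2).rank = 1 := by
  refine le_antisymm ?_ (rank_g2X_sq_ge_one b c d e h2 ha)
  have huv : (g2X a b c d e 0)^2 =
      (!![c; -(2*b); 2*a; 0; 0; 0; 0] : Matrix (Fin 7) (Fin 1) F) *
      (!![0,0,0,0,a,b,c/2] : Matrix (Fin 1) (Fin 7) F) := by
    rw [g2X_sq]
    ext i j
    fin_cases i <;> fin_cases j <;>
      (simp [Matrix.mul_apply, Fin.sum_univ_one, Matrix.vecHead, Matrix.vecTail];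
       try ring; try field_simp; try linear_combination hQ; try ring)
  rw [huv]
  refine (Matrix.rank_mul_le_right _ _).trans ?_
  simpa using Matrix.rank_le_card_height (!![0,0,0,0,a,b,c/2] : Matrix (Fin 1) (Fin 7) F)

set_option maxHeartbeats 1000000 in
lemma rank_g2X_sq_ge_two {a : F} (b c d e : F) (ha : a ≠ 0)
    (hQ : 4*a*e - 4*b*d + 3*c^2 ≠ 0) : 2 ≤ ((g2X a b c d e 0)^2).rank := by
  refine rank_ge_of_submul _
    (!![1,0,0,0,0,0,0; 0,0,1,0,0,0,0] : Matrix (Fin 2) (Fin 7) F)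
    (!![0,0;0,0;0,0;0,0;1,0;0,0;0,1] : Matrix (Fin 7) (Fin 2) F) ?_
  have hM : (!![1,0,0,0,0,0,0; 0,0,1,0,0,0,0] : Matrix (Fin 2) (Fin 7) F) *
      (g2X a b c d e 0)^2 *
      (!![0,0;0,0;0,0;0,0;1,0;0,0;0,1] : Matrix (Fin 7) (Fin 2) F) =
      !![a*c, 2*c^2 - 2*b*d + 2*a*e; 2*a^2, a*c] := by
    rw [g2X_sq]
    ext i j
    fin_cases i <;> fin_cases j <;>
      (simp [Matrix.mul_apply, Fin.sum_univ_seven, Matrix.vecHead, Matrix.vecTail]; try ring)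
  rw [hM, Matrix.det_fin_two]
  refine isUnit_iff_ne_zero.mpr ?_
  intro h0
  apply hQ
  have ha2 : a^2 ≠ 0 := pow_ne_zero 2 ha
  have : a^2 * (4*a*e - 4*b*d + 3*c^2) = 0 := by
    simp only [Matrix.cons_val_zero, Matrix.cons_val_one, Matrix.head_cons,
      Matrix.cons_val', Matrix.cons_val_fin_one, Matrix.of_apply, Matrix.head_fin_const] at h0
    linear_combination -h0
  exact (mul_eq_zero.mp this).resolve_left ha2

end Ranks

/-- The number of tuples `(a,b,c,d,e) ∈ F^5` with `a ≠ 0` satisfying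
`4ae − 4bd + 3c² = 0` equals `q³·(q−1)`. Consequently the number of tuples
`(a,b,c,d,e,f) ∈ F^6` with `a ≠ 0`, `f = 0`, `rank X = 4` and `rank X² = 1`
equals `q³·(q−1)`. -/
theorem count_case3_41 (F : Type*) [Field F] [Fintype F]
    (q : ℕ) (hq : Fintype.card F = q) (hchar : 3 < ringChar F) :
    {v : F × F × F × F × F | v.1 ≠ 0 ∧
        4 * v.1 * v.2.2.2.2 - 4 * v.2.1 * v.2.2.2.1 + 3 * v.2.2.1 ^ 2 = 0}.ncard =
      q ^ 3 * (q - 1) ∧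
    {v : F × F × F × F × F × F | v.1 ≠ 0 ∧ v.2.2.2.2.2 = 0 ∧
        (g2X v.1 v.2.1 v.2.2.1 v.2.2.2.1 v.2.2.2.2.1 v.2.2.2.2.2).rank = 4 ∧
        ((g2X v.1 v.2.1 v.2.2.1 v.2.2.2.1 v.2.2.2.2.1 v.2.2.2.2.2) ^ 2).rank = 1}.ncard =
      q ^ 3 * (q - 1) := by
  -- characteristic facts
  have h2 : (2:F) ≠ 0 := by
    intro h
    have hd : ringChar F ∣ 2 := by
      rw [← ringChar.spec]; exact_mod_cast h
    have := Nat.le_of_dvd (by norm_num) hd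
    omega
  have h3 : (3:F) ≠ 0 := by
    intro h
    have hd : ringChar F ∣ 3 := by
      rw [← ringChar.spec]; exact_mod_cast h
    have := Nat.le_of_dvd (by norm_num) hd
    omega
  have h4 : (4:F) ≠ 0 := by
    have : (4:F) = 2 * 2 := by norm_num
    rw [this]; exact mul_ne_zero h2 h2
  -- the first set
  set S1 : Set (F × F × F × F × F) := {v | v.1 ≠ 0 ∧
      4 * v.1 * v.2.2.2.2 - 4 * v.2.1 * v.2.2.2.1 + 3 * v.2.2.1 ^ 2 = 0} with hS1def
  -- count S1
  have hcount : S1.ncard = q ^ 3 * (q - 1) := by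
    set f1 : ({a : F // a ≠ 0} × F × F × F) → F × F × F × F × F :=
      fun x => (x.1.1, x.2.1, x.2.2.1, x.2.2.2,
        (4 * x.2.1 * x.2.2.2 - 3 * x.2.2.1 ^ 2) / (4 * x.1.1)) with hf1def
    have hinj : Function.Injective f1 := by
      rintro ⟨⟨xa, hxa⟩, xb, xc, xd⟩ ⟨⟨ya, hya⟩, yb, yc, yd⟩ h
      simp only [hf1def, Prod.mk.injEq, Subtype.mk.injEq] at h ⊢
      exact ⟨h.1, h.2.1, h.2.2.1, h.2.2.2.1⟩
    have himg : S1 = Set.range f1 := by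
      ext ⟨a, b, c, d, e⟩
      simp only [hS1def, hf1def, Set.mem_setOf_eq, Set.mem_range, Prod.mk.injEq, Prod.exists,
        Subtype.exists, exists_prop]
      constructor
      · rintro ⟨ha, heq⟩
        refine ⟨a, ha, b, c, d, rfl, rfl, rfl, rfl, ?_⟩
        have h4a : 4 * a ≠ 0 := mul_ne_zero h4 ha
        field_simp
        linear_combination -heq
      · rintro ⟨a', ha', b', c', d', rfl, rfl, rfl, rfl, rfl⟩
        refine ⟨ha', ?_⟩
        have h4a : 4 * a' ≠ 0 := mul_ne_zero h4 ha'
        field_simp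
        try ring
    rw [himg, ← Set.image_univ, Set.ncard_image_of_injective _ hinj, Set.ncard_univ]
    have hne : Nat.card {a : F // a ≠ 0} = q - 1 := by
      rw [← Nat.card_congr (unitsEquivNeZero (G₀ := F)), Nat.card_units,
        Nat.card_eq_fintype_card, hq]
    rw [Nat.card_prod, Nat.card_prod, Nat.card_prod, hne, Nat.card_eq_fintype_card, hq]
    set r := q - 1 with hr
    ring
  refine ⟨hcount, ?_⟩
  -- the second set
  have hg6inj : Function.Injective
      (fun v : F × F × F × F × F => (v.1, v.2.1, v.2.2.1, v.2.2.2.1, v.2.2.2.2, (0:F))) := by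
    rintro ⟨a, b, c, d, e⟩ ⟨a', b', c', d', e'⟩ h
    simp only [Prod.mk.injEq] at h ⊢
    exact ⟨h.1, h.2.1, h.2.2.1, h.2.2.2.1, h.2.2.2.2.1⟩
  have hS2 : {v : F × F × F × F × F × F | v.1 ≠ 0 ∧ v.2.2.2.2.2 = 0 ∧
        (g2X v.1 v.2.1 v.2.2.1 v.2.2.2.1 v.2.2.2.2.1 v.2.2.2.2.2).rank = 4 ∧
        ((g2X v.1 v.2.1 v.2.2.1 v.2.2.2.1 v.2.2.2.2.1 v.2.2.2.2.2) ^ 2).rank = 1} =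
      (fun v : F × F × F × F × F => (v.1, v.2.1, v.2.2.1, v.2.2.2.1, v.2.2.2.2, (0:F))) '' S1 := by
    ext ⟨a, b, c, d, e, f⟩
    simp only [Set.mem_setOf_eq, Set.mem_image, hS1def, Prod.mk.injEq, Prod.exists]
    constructor
    · rintro ⟨ha, hf, hr4, hr1⟩
      subst hf
      refine ⟨a, b, c, d, e, ⟨ha, ?_⟩, rfl, rfl, rfl, rfl, rfl, rfl⟩
      by_contra hQ
      have h22 := rank_g2X_sq_ge_two b c d e ha hQ
      rw [hr1] at h22
      exact absurd h22 (by norm_num)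
    · rintro ⟨a', b', c', d', e', ⟨ha', hQ'⟩, rfl, rfl, rfl, rfl, rfl, rfl⟩
      exact ⟨ha', rfl, rank_g2X b' c' d' e' h2 ha',
        rank_g2X_sq_of_eq b' c' d' e' h2 ha' hQ'⟩
  rw [hS2, Set.ncard_image_of_injective _ hg6inj, hcount]
end

section
/- Suppose a = 0 and f = 0, and let X = X(0,b,c,d,e,0). If b ≠ 0, then rank X² = 1 if 3c² − 4bd = 0 and rank X² = 2 otherwise. If b = 0, then rank X² = 0 if c = 0 and rank X² = 1 if c ≠ 0. -/
namespace Matrix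

variable {l m n o : Type*} {R : Type*}

theorem rank_mul_mul_of_mul_eq_one [Fintype l] [Fintype m] [Fintype n] [Fintype o]
    [CommSemiring R] [StrongRankCondition R] [DecidableEq n] [DecidableEq o] {A : Matrix m n R}
    {P : Matrix n m R} {B : Matrix o l R} {Q : Matrix l o R} (hA : P * A = 1) (hB : B * Q = 1)
    (K : Matrix n o R) :
    (A * K * B).rank = K.rank := by
  refine le_antisymm ((rank_mul_le_left _ _).trans (rank_mul_le_right _ _)) ?_
  calc K.rank = (P * (A * K * B) * Q).rank := by
        simp only [Matrix.mul_assoc, hB, Matrix.mul_one, ← Matrix.mul_assoc P, hA,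
          Matrix.one_mul]
    _ ≤ (A * K * B).rank := (rank_mul_le_left _ _).trans (rank_mul_le_right _ _)

theorem rank_eq_zero_iff [Fintype n] [Field R] {A : Matrix m n R} : A.rank = 0 ↔ A = 0 := by
  classical
  rw [rank, Submodule.finrank_eq_zero, LinearMap.range_eq_bot, ← toLin'_apply',
    LinearEquiv.map_eq_zero_iff]

theorem rank_lt_card_of_det_eq_zero [Fintype n] [Field R] [DecidableEq n] {A : Matrix n n R}
    (h : A.det = 0) : A.rank < Fintype.card n := by
  refine (rank_le_card_height A).lt_of_ne fun hrank => ?_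
  have hsurj : Function.Surjective A.mulVec := by
    rw [← coe_mulVecLin, ← LinearMap.range_eq_top]
    exact Submodule.eq_top_of_finrank_eq <| by
      rw [← rank, hrank, Module.finrank_fintype_fun_eq_card]
  exact (isUnit_iff_isUnit_det A).mp ((mulVec_surjective_iff_isUnit).mp hsurj) |>.ne_zero h

theorem rank_fin_two_eq_one [Field R] {A : Matrix (Fin 2) (Fin 2) R} (hdet : A.det = 0)
    (hA : A ≠ 0) : A.rank = 1 := by
  have hlt := rank_lt_card_of_det_eq_zero hdet
  have hne : A.rank ≠ 0 := mt Matrix.rank_eq_zero_iff.mp hA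
  rw [Fintype.card_fin] at hlt
  omega

end Matrix

open Matrix

section

variable {F : Type*} [Field F]

def g2XSqBlock (b c d : F) : Matrix (Fin 2) (Fin 2) F :=
  !![b * c, 2 * c ^ 2 - 2 * b * d; -2 * b ^ 2, -(b * c)]

theorem det_g2XSqBlock (b c d : F) :
    (g2XSqBlock b c d).det = b ^ 2 * (3 * c ^ 2 - 4 * b * d) := by
  rw [g2XSqBlock, det_fin_two_of]
  ring

theorem g2X_zero_sq (b c d e : F) :
    g2X 0 b c d e 0 ^ 2 =
      !![(1 : F), 0; 0, 1; 0, 0; 0, 0; 0, 0; 0, 0; 0, 0] * g2XSqBlock b c d *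
        !![(0 : F), 0, 0, 0, 0, 1, 0; 0, 0, 0, 0, 0, 0, 1] := by
  ext i j
  fin_cases i <;> fin_cases j <;>
    simp [g2X, g2XSqBlock, sq, Matrix.mul_apply, Fin.sum_univ_succ] <;> ring

theorem rank_g2X_zero_sq (b c d e : F) :
    (g2X 0 b c d e 0 ^ 2).rank = (g2XSqBlock b c d).rank := by
  rw [g2X_zero_sq]
  refine rank_mul_mul_of_mul_eq_one (P := !![(1 : F), 0, 0, 0, 0, 0, 0; 0, 1, 0, 0, 0, 0, 0])
    (Q := !![(0 : F), 0; 0, 0; 0, 0; 0, 0; 0, 0; 1, 0; 0, 1]) ?_ ?_ _ <;>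
    ext i j <;> fin_cases i <;> fin_cases j <;> simp [Matrix.mul_apply, Fin.sum_univ_succ]

end

theorem g2_case4_rank_X_sq_general (F : Type*) [Field F] (hchar : 3 < ringChar F)
    (b c d e : F) :
    (b ≠ 0 → (3 * c ^ 2 - 4 * b * d = 0 → ((g2X 0 b c d e 0) ^ 2).rank = 1) ∧
      (3 * c ^ 2 - 4 * b * d ≠ 0 → ((g2X 0 b c d e 0) ^ 2).rank = 2)) ∧
    (b = 0 → (c = 0 → ((g2X 0 b c d e 0) ^ 2).rank = 0) ∧
      (c ≠ 0 → ((g2X 0 b c d e 0) ^ 2).rank = 1)) := by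
  have h2 : (2 : F) ≠ 0 := Ring.two_ne_zero (by omega)
  rw [rank_g2X_zero_sq]
  refine ⟨fun hb => ⟨fun hδ => ?_, fun hδ => ?_⟩, fun hb => ⟨fun hc => ?_, fun hc => ?_⟩⟩
  · refine rank_fin_two_eq_one (by rw [det_g2XSqBlock, hδ, mul_zero]) fun h => ?_
    have h10 := congrFun₂ h 1 0
    simp [g2XSqBlock, h2, hb] at h10
  · refine (rank_of_det_ne_zero ?_).trans (Fintype.card_fin 2)
    rw [det_g2XSqBlock]
    exact mul_ne_zero (pow_ne_zero 2 hb) hδ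
  · rw [Matrix.rank_eq_zero_iff]
    ext i j
    fin_cases i <;> fin_cases j <;> simp [g2XSqBlock, hb, hc]
  · refine rank_fin_two_eq_one (by rw [det_g2XSqBlock, hb]; ring) fun h => ?_
    have h01 := congrFun₂ h 0 1
    simp [g2XSqBlock, h2, hb, hc] at h01

/-- Let `a = 0` and `f = 0`, `X = X(0,b,c,d,e,0)`. If `b ≠ 0` then `rank X² = 1`
when `3c² − 4bd = 0` and `rank X² = 2` otherwise. If `b = 0` then `rank X² = 0`
when `c = 0` and `rank X² = 1` when `c ≠ 0`. -/
theorem g2_case4_rank_X_sq (F : Type*) [Field F] [Fintype F] (hchar : 3 < ringChar F)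
    (b c d e : F) :
    (b ≠ 0 → (3 * c ^ 2 - 4 * b * d = 0 → ((g2X 0 b c d e 0) ^ 2).rank = 1) ∧
      (3 * c ^ 2 - 4 * b * d ≠ 0 → ((g2X 0 b c d e 0) ^ 2).rank = 2)) ∧
    (b = 0 → (c = 0 → ((g2X 0 b c d e 0) ^ 2).rank = 0) ∧
      (c ≠ 0 → ((g2X 0 b c d e 0) ^ 2).rank = 1)) :=
  g2_case4_rank_X_sq_general F hchar b c d e
end
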